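/- Let k_F be a finite field of cardinality p^f (p prime) and k an algebraically closed field (or a sufficiently large field) of characteristic p containing it. Then for every group homomorphism θ̄ : k_F^× → k^×, there exist uniquely determined integers 0 ≤ b_σ ≤ p−1, indexed by the f field embeddings σ : k_F ↪ k, with not all b_σ equal to p−1, such that θ̄(x) = ∏_σ σ(x)^{b_σ} for all x ∈ k_F^×. -/
import Mathlib

private lemma stmt3_digitsum (p : ℕ) (hp : 0 < p) : ∀ f n, n < p ^ f →
    ∑ i ∈ Finset.range f, n / p ^ i % p * p ^ i = n := by
  intro f
  induction f with
  | zero =>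
    intro n hn
    simp only [pow_zero, Nat.lt_one_iff] at hn
    simp [hn]
  | succ f ih =>
    intro n hn
    rw [Finset.sum_range_succ']
    have hdiv : n / p < p ^ f := by
      rw [Nat.div_lt_iff_lt_mul hp]
      calc n < p ^ (f + 1) := hn
        _ = p ^ f * p := by rw [pow_succ]
    have h1 : ∀ i, n / p ^ (i + 1) % p * p ^ (i + 1) = (n / p / p ^ i % p * p ^ i) * p := by
      intro i
      rw [Nat.div_div_eq_div_mul, ← pow_succ', pow_succ, ← mul_assoc]
    simp only [h1]
    rw [← Finset.sum_mul, ih (n / p) hdiv]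
    simp only [pow_zero, Nat.div_one, mul_one]
    rw [mul_comm]
    exact Nat.div_add_mod n p

private lemma stmt3_digit_inj (p : ℕ) : ∀ f (b b' : ℕ → ℕ), (∀ i, i < f → b i < p) →
    (∀ i, i < f → b' i < p) →
    (∑ i ∈ Finset.range f, b i * p ^ i) = (∑ i ∈ Finset.range f, b' i * p ^ i) →
    ∀ i, i < f → b i = b' i := by
  intro f
  induction f with
  | zero => intro b b' _ _ _ i hi; omega
  | succ f ih =>
    intro b b' hb hb' hsum i hi
    rw [Finset.sum_range_succ', Finset.sum_range_succ'] at hsum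
    have e : ∀ c : ℕ → ℕ, ∑ j ∈ Finset.range f, c (j + 1) * p ^ (j + 1)
        = p * ∑ j ∈ Finset.range f, c (j + 1) * p ^ j := by
      intro c; rw [Finset.mul_sum]
      exact Finset.sum_congr rfl fun j _ => by rw [pow_succ]; ring
    rw [e b, e b', pow_zero, mul_one, mul_one] at hsum
    have hb0 : b 0 < p := hb 0 (by omega)
    have hb0' : b' 0 < p := hb' 0 (by omega)
    have h0 : b 0 = b' 0 := by
      have h := congrArg (· % p) hsum
      simpa [Nat.mul_add_mod, Nat.mod_eq_of_lt hb0, Nat.mod_eq_of_lt hb0'] using h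
    have hS : (∑ j ∈ Finset.range f, b (j + 1) * p ^ j)
        = ∑ j ∈ Finset.range f, b' (j + 1) * p ^ j := by
      have hp0 : 0 < p := by omega
      have : p * (∑ j ∈ Finset.range f, b (j + 1) * p ^ j)
          = p * ∑ j ∈ Finset.range f, b' (j + 1) * p ^ j := by omega
      exact Nat.eq_of_mul_eq_mul_left hp0 this
    match i with
    | 0 => exact h0
    | j + 1 =>
      exact ih (fun i => b (i + 1)) (fun i => b' (i + 1))
        (fun i h => hb (i + 1) (by omega)) (fun i h => hb' (i + 1) (by omega)) hS j (by omega)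

private lemma stmt3_digit_lt (p : ℕ) (hp : 0 < p) : ∀ f (b : ℕ → ℕ), (∀ i, i < f → b i < p) →
    ∑ i ∈ Finset.range f, b i * p ^ i < p ^ f := by
  intro f
  induction f with
  | zero => simp
  | succ f ih =>
    intro b hb
    rw [Finset.sum_range_succ]
    have h1 : ∑ i ∈ Finset.range f, b i * p ^ i < p ^ f := ih b fun i hi => hb i (by omega)
    have h2 : b f ≤ p - 1 := by have := hb f (by omega); omega
    have h3 : b f * p ^ f ≤ (p - 1) * p ^ f := Nat.mul_le_mul_right _ h2
    have h5 : p ^ f + (p - 1) * p ^ f = p * p ^ f := by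
      have h6 : 1 + (p - 1) = p := by omega
      calc p ^ f + (p - 1) * p ^ f = (1 + (p - 1)) * p ^ f := by ring
        _ = p * p ^ f := by rw [h6]
    have h7 : p ^ (f + 1) = p * p ^ f := by rw [pow_succ]; ring
    omega

private lemma stmt3_allmax (p : ℕ) (hp : 0 < p) :
    ∀ f, ∑ i ∈ Finset.range f, (p - 1) * p ^ i + 1 = p ^ f := by
  intro f
  induction f with
  | zero => simp
  | succ f ih =>
    rw [Finset.sum_range_succ]
    have h5 : p ^ f + (p - 1) * p ^ f = p * p ^ f := by
      have h6 : 1 + (p - 1) = p := by omega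
      calc p ^ f + (p - 1) * p ^ f = (1 + (p - 1)) * p ^ f := by ring
        _ = p * p ^ f := by rw [h6]
    have h7 : p ^ (f + 1) = p * p ^ f := by rw [pow_succ]; ring
    omega

/-- Lemma 2.4: every character `θ̄ : k_F^× → k^×` of the multiplicative group of a finite
field `k_F` of cardinality `p^f`, valued in a characteristic `p` field `k` admitting exactly
`f` embeddings of `k_F`, has a unique expansion `θ̄ = ∏_σ σ^{b_σ}` with `0 ≤ b_σ ≤ p - 1`
and not all `b_σ = p - 1`. -/
theorem stmt_3 (p f : ℕ) (hp : p.Prime) (hf : 0 < f)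
    (k_F : Type*) [Field k_F] [Fintype k_F] (hcard : Fintype.card k_F = p ^ f)
    (k : Type*) [Field k] [CharP k p]
    [Fintype (k_F →+* k)] (hemb : Fintype.card (k_F →+* k) = f)
    (θ : k_Fˣ →* kˣ) :
    ∃! b : (k_F →+* k) → ℕ,
      (∀ σ, b σ ≤ p - 1) ∧ ¬ (∀ σ, b σ = p - 1) ∧
      ∀ x : k_Fˣ, ((θ x : kˣ) : k) = ∏ σ : (k_F →+* k), σ (x : k_F) ^ b σ := by
  classical
  haveI hFp : Fact p.Prime := ⟨hp⟩
  have hp1 : 1 < p := hp.one_lt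
  have hne : Nonempty (k_F →+* k) := Fintype.card_pos_iff.mp (by rw [hemb]; exact hf)
  obtain ⟨σ₀⟩ := hne
  haveI : CharP k_F p := σ₀.charP σ₀.injective p
  haveI : ExpChar k_F p := .prime hp
  set q := p ^ f with hq
  have hq2 : 2 ≤ q := by
    calc 2 ≤ p := hp.two_le
      _ = p ^ 1 := (pow_one p).symm
      _ ≤ p ^ f := Nat.pow_le_pow_right (by omega) hf
  set N := q - 1 with hN
  have hN1 : 1 ≤ N := by omega
  -- generator of k_Fˣ
  obtain ⟨g, hg⟩ := IsCyclic.exists_generator (α := k_Fˣ)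
  have hordg : orderOf g = N := by
    rw [orderOf_eq_card_of_forall_mem_zpowers hg, Nat.card_eq_fintype_card,
      Fintype.card_units, hcard]
  -- embeddings F i = σ₀ ∘ Frob^i
  set F : ℕ → (k_F →+* k) := fun i => σ₀.comp (iterateFrobenius k_F p i) with hFdef
  have hF : ∀ i (x : k_F), F i x = σ₀ x ^ p ^ i := by
    intro i x
    simp [hFdef, iterateFrobenius_def, map_pow]
  -- unit-level map
  set u : k_Fˣ →* kˣ := Units.map (σ₀ : k_F →* k) with hu
  have hui : Function.Injective u := Units.map_injective σ₀.injective
  have hordu : orderOf (u g) = N := by rw [orderOf_injective u hui g, hordg]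
  have hugN : u g ^ N = 1 := by rw [← hordu]; exact pow_orderOf_eq_one _
  have hcoeu : ((u g : kˣ) : k) = σ₀ ((g : k_Fˣ) : k_F) := rfl
  -- injectivity of F on Fin f
  have hginj : ∀ i j : Fin f, F i = F j → i = j := by
    intro i j hFij
    by_contra hij
    have hij' : (i : ℕ) ≠ (j : ℕ) := fun h => hij (Fin.ext h)
    have hf2 : 2 ≤ f := by
      have hi := i.isLt
      have hj := j.isLt
      omega
    have hpow_lt : ∀ m, m < f → p ^ m < N := by
      intro m hm
      have h5 : p ^ m ≤ p ^ (f - 1) := Nat.pow_le_pow_right (by omega) (by omega)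
      have h6 : p ^ f = p * p ^ (f - 1) := by rw [← pow_succ']; congr 1; omega
      have h7 : 2 ≤ p ^ (f - 1) := by
        calc 2 ≤ p := hp.two_le
          _ = p ^ 1 := (pow_one p).symm
          _ ≤ p ^ (f - 1) := Nat.pow_le_pow_right (by omega) (by omega)
      have h8 : 2 * p ^ (f - 1) ≤ p * p ^ (f - 1) := Nat.mul_le_mul_right _ hp.two_le
      omega
    have h1 : σ₀ (((g : k_Fˣ) : k_F)) ^ p ^ (i : ℕ) = σ₀ (((g : k_Fˣ) : k_F)) ^ p ^ (j : ℕ) := by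
      have := congrArg (fun φ : k_F →+* k => φ ((g : k_Fˣ) : k_F)) hFij
      simpa [hF] using this
    have h2 : ((g : k_Fˣ) : k_F) ^ p ^ (i : ℕ) = ((g : k_Fˣ) : k_F) ^ p ^ (j : ℕ) := by
      apply σ₀.injective
      rw [map_pow, map_pow]
      exact h1
    have h3 : g ^ p ^ (i : ℕ) = g ^ p ^ (j : ℕ) := by
      apply Units.ext
      push_cast
      exact h2
    have h4 : p ^ (i : ℕ) ≡ p ^ (j : ℕ) [MOD N] := by
      rw [← hordg]; exact pow_eq_pow_iff_modEq.mp h3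
    have h5 : p ^ (i : ℕ) = p ^ (j : ℕ) := by
      have hmi := Nat.mod_eq_of_lt (hpow_lt _ i.isLt)
      have hmj := Nat.mod_eq_of_lt (hpow_lt _ j.isLt)
      unfold Nat.ModEq at h4
      omega
    exact hij' (Nat.pow_right_injective hp.two_le h5)
  have hbij : Function.Bijective (fun i : Fin f => F (i : ℕ)) :=
    (Fintype.bijective_iff_injective_and_card _).mpr
      ⟨fun i j h => hginj i j h, by simp [hemb]⟩
  set E : Fin f ≃ (k_F →+* k) := Equiv.ofBijective _ hbij with hE
  have hEapp : ∀ i : Fin f, E i = F (i : ℕ) := fun i => rfl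
  -- θ g is a power of u g
  have hθN : θ g ^ N = 1 := by
    rw [← hordg, ← map_pow, pow_orderOf_eq_one, map_one]
  obtain ⟨m, hm, hθg⟩ : ∃ m, m < N ∧ θ g = u g ^ m := by
    by_contra hc
    push_neg at hc
    set R : Finset k := (Polynomial.nthRoots N (1 : k)).toFinset with hR
    have hmemR : ∀ x : kˣ, x ^ N = 1 → (x : k) ∈ R := by
      intro x hx
      rw [hR, Multiset.mem_toFinset, Polynomial.mem_nthRoots (by omega)]
      have h := congrArg (Units.val) hx
      simpa using h
    have hcardR : R.card ≤ N :=
      le_trans (Multiset.toFinset_card_le _) (Polynomial.card_nthRoots N (1 : k))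
    set S : Finset k := (Finset.range N).image (fun a => ((u g ^ a : kˣ) : k)) with hS
    have hScard : S.card = N := by
      rw [hS, Finset.card_image_of_injOn, Finset.card_range]
      intro a ha b hb hab
      simp only [Finset.coe_range, Set.mem_Iio] at ha hb
      have h := pow_injOn_Iio_orderOf (x := u g) (by simpa [hordu] using ha)
        (by simpa [hordu] using hb) (Units.ext hab)
      exact h
    have hSR : S ⊆ R := by
      intro x hx
      rw [hS, Finset.mem_image] at hx
      obtain ⟨a, _, rfl⟩ := hx
      apply hmemR
      rw [← pow_mul, mul_comm, pow_mul, hugN, one_pow]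
    have hθR : ((θ g : kˣ) : k) ∈ R := hmemR _ hθN
    have hθS : ((θ g : kˣ) : k) ∉ S := by
      rw [hS, Finset.mem_image]
      rintro ⟨a, ha, hax⟩
      exact hc a (Finset.mem_range.mp ha) (Units.ext hax.symm)
    have hcontra : N + 1 ≤ R.card := by
      have h1 : insert ((θ g : kˣ) : k) S ⊆ R := Finset.insert_subset hθR hSR
      have h2 := Finset.card_le_card h1
      rwa [Finset.card_insert_of_notMem hθS, hScard] at h2
    omega
  -- digits of m
  set b0 : ℕ → ℕ := fun i => m / p ^ i % p with hb0
  have hsum0 : ∑ i ∈ Finset.range f, b0 i * p ^ i = m :=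
    stmt3_digitsum p (by omega) f m (by omega)
  -- reindexing products and sums
  set dd : ((k_F →+* k) → ℕ) → ℕ → ℕ :=
    fun c i => if h : i < f then c (E ⟨i, h⟩) else 0 with hdd
  have hsum_dd : ∀ c : (k_F →+* k) → ℕ,
      ∑ i : Fin f, c (E i) * p ^ (i : ℕ) = ∑ i ∈ Finset.range f, dd c i * p ^ i := by
    intro c
    rw [← Fin.sum_univ_eq_sum_range (fun i => dd c i * p ^ i) f]
    apply Finset.sum_congr rfl
    intro i _
    simp [hdd, i.isLt]
  have hprod : ∀ (c : (k_F →+* k) → ℕ) (x : k_F),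
      ∏ σ : (k_F →+* k), σ x ^ c σ = σ₀ x ^ ∑ i ∈ Finset.range f, dd c i * p ^ i := by
    intro c x
    rw [← hsum_dd c, ← E.prod_comp (fun σ => σ x ^ c σ), ← Finset.prod_pow_eq_pow_sum]
    apply Finset.prod_congr rfl
    intro i _
    rw [hEapp, hF, ← pow_mul, mul_comm]
  -- the candidate
  set b : (k_F →+* k) → ℕ := fun σ => b0 ((E.symm σ : Fin f) : ℕ) with hbdef
  have hddb : ∀ i, i < f → dd b i = b0 i := by
    intro i hi
    simp only [hdd, hi, dif_pos, hbdef, Equiv.symm_apply_apply]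
  have hsumb : ∑ i ∈ Finset.range f, dd b i * p ^ i = m := by
    rw [Finset.sum_congr rfl fun i hi => by rw [hddb i (Finset.mem_range.mp hi)]]
    exact hsum0
  -- value identity
  have hval : ∀ x : k_Fˣ, ((θ x : kˣ) : k) = σ₀ ((x : k_F)) ^ m := by
    intro x
    obtain ⟨t, rfl⟩ := (mem_powers_iff_mem_zpowers).mpr (hg x)
    calc ((θ (g ^ t) : kˣ) : k) = (((u g ^ m) ^ t : kˣ) : k) := by rw [map_pow, hθg]
      _ = ((u g : kˣ) : k) ^ (m * t) := by rw [← pow_mul]; exact Units.val_pow_eq_pow_val _ _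
      _ = σ₀ (((g : k_Fˣ) : k_F)) ^ (m * t) := by rw [hcoeu]
      _ = σ₀ ((((g : k_Fˣ) : k_F)) ^ t) ^ m := by rw [map_pow, ← pow_mul, mul_comm]
      _ = σ₀ (((g ^ t : k_Fˣ) : k_F)) ^ m := by push_cast; ring
  refine ⟨b, ⟨?_, ?_, ?_⟩, ?_⟩
  · intro σ
    have : b σ < p := Nat.mod_lt _ (by omega)
    omega
  · intro hall
    have hdig : ∀ i, i < f → b0 i = p - 1 := by
      intro i hi
      have := hall (E ⟨i, hi⟩)
      simpa [hbdef, Equiv.symm_apply_apply] using this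
    have : m = N := by
      have h1 : ∑ i ∈ Finset.range f, b0 i * p ^ i
          = ∑ i ∈ Finset.range f, (p - 1) * p ^ i :=
        Finset.sum_congr rfl fun i hi => by rw [hdig i (Finset.mem_range.mp hi)]
      have h2 := stmt3_allmax p (by omega) f
      omega
    omega
  · intro x
    rw [hprod b (x : k_F), hsumb]
    exact hval x
  · -- uniqueness
    intro b' ⟨hb'le, hb'ne, hb'val⟩
    have hb'lt : ∀ σ, b' σ < p := fun σ => by have := hb'le σ; omega
    have hddlt : ∀ i, i < f → dd b' i < p := by
      intro i hi
      simp only [hdd, hi, dif_pos]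
      exact hb'lt _
    set M := ∑ i ∈ Finset.range f, dd b' i * p ^ i with hM
    have hMq : M < q := stmt3_digit_lt p (by omega) f _ hddlt
    have hMne : M ≠ N := by
      intro hMN
      apply hb'ne
      have h2 := stmt3_allmax p (by omega) f
      have h1 : M = ∑ i ∈ Finset.range f, (p - 1) * p ^ i := by omega
      have h3 := stmt3_digit_inj p f (dd b') (fun _ => p - 1) hddlt
        (fun i _ => by show p - 1 < p; omega) (hM ▸ h1)
      intro σ
      have h4 := h3 ((E.symm σ : Fin f) : ℕ) (E.symm σ).isLt
      simpa [hdd, (E.symm σ).isLt, Fin.eta, Equiv.apply_symm_apply] using h4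
    -- equate exponents at g
    have hMg : σ₀ (((g : k_Fˣ) : k_F)) ^ m = σ₀ (((g : k_Fˣ) : k_F)) ^ M := by
      rw [← hval g, hb'val g, hprod b' ((g : k_Fˣ) : k_F)]
    have hMgu : u g ^ m = u g ^ M := by
      apply Units.ext
      rw [Units.val_pow_eq_pow_val, Units.val_pow_eq_pow_val, hcoeu]
      exact hMg
    have hmod : m ≡ M [MOD N] := by rw [← hordu]; exact pow_eq_pow_iff_modEq.mp hMgu
    have hmM : m = M := by
      have hMN : M < N := by omega
      have h1 := Nat.mod_eq_of_lt hm
      have h2 := Nat.mod_eq_of_lt hMN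
      unfold Nat.ModEq at hmod
      omega
    have hdig := stmt3_digit_inj p f b0 (dd b')
      (fun i _ => Nat.mod_lt _ (by omega)) hddlt (by omega)
    funext σ
    have h4 := hdig ((E.symm σ : Fin f) : ℕ) (E.symm σ).isLt
    have h5 : dd b' ((E.symm σ : Fin f) : ℕ) = b' σ := by
      simp [hdd, (E.symm σ).isLt, Fin.eta, Equiv.apply_symm_apply]
    rw [hbdef]
    simp only [← h4, h5]
    exact h5 ▸ h4.symm
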